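/- arXiv:2501.11522 — 5 statements merged into one kernel-verified Lean document; each statement's English description precedes it below -/
import Mathlib

section
/- Let L > 0, d ∈ {1,2,3}, and let μ : [0,L] → ℝ be continuous with μ(s) > 0. Let a, b : [0,L] → ℝᵈ be continuous, let n : [0,L] → ℝᵈ be continuously differentiable, and let u ∈ ℝᵈ. Suppose that for every continuously differentiable test function w : [0,L] → ℝᵈ one has ∫₀ᴸ μ(s) ⟨a(s), w(s)⟩ ds = -∫₀ᴸ ⟨n(s), w'(s)⟩ ds + ∫₀ᴸ ⟨b(s), w(s)⟩ ds + ⟨u, w(0)⟩. Then the strong equation μ(s) a(s) = n'(s) + b(s) holds for all s ∈ [0,L], and the boundary conditions n(0) = -u and n(L) = 0 hold. -/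
open Set MeasureTheory
open scoped InnerProductSpace

/-- If the weak (variational) formulation holds for every C¹ test function, then the
strong momentum balance of the geometrically exact string and the boundary conditions
`n 0 = -u`, `n L = 0` hold. -/
theorem string_weak_implies_strong
    {d : ℕ} (hd : d = 1 ∨ d = 2 ∨ d = 3)
    {L : ℝ} (hL : 0 < L)
    (μ : ℝ → ℝ) (hμc : ContinuousOn μ (Icc 0 L))
    (hμpos : ∀ s ∈ Icc (0:ℝ) L, 0 < μ s)
    (a b n n' : ℝ → EuclideanSpace ℝ (Fin d))
    (ha : ContinuousOn a (Icc 0 L)) (hb : ContinuousOn b (Icc 0 L))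
    (hn : ∀ s ∈ Icc (0:ℝ) L, HasDerivWithinAt n (n' s) (Icc 0 L) s)
    (hn' : ContinuousOn n' (Icc 0 L))
    (u : EuclideanSpace ℝ (Fin d))
    (hweak : ∀ (w w' : ℝ → EuclideanSpace ℝ (Fin d)),
      (∀ s ∈ Icc (0:ℝ) L, HasDerivWithinAt w (w' s) (Icc 0 L) s) →
      ContinuousOn w' (Icc 0 L) →
      (∫ s in (0:ℝ)..L, μ s * ⟪a s, w s⟫_ℝ)
        = -(∫ s in (0:ℝ)..L, ⟪n s, w' s⟫_ℝ)
          + (∫ s in (0:ℝ)..L, ⟪b s, w s⟫_ℝ) + ⟪u, w 0⟫_ℝ) :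
    (∀ s ∈ Icc (0:ℝ) L, μ s • a s = n' s + b s) ∧ n 0 = -u ∧ n L = 0 := by
  have hnc : ContinuousOn n (Icc 0 L) := fun s hs => (hn s hs).continuousWithinAt
  set F : ℝ → EuclideanSpace ℝ (Fin d) := fun s => μ s • a s - n' s - b s with hF
  have hFc : ContinuousOn F (Icc 0 L) := ((hμc.smul ha).sub hn').sub hb
  -- Main consequence of the weak form, after integration by parts.
  have main : ∀ (w w' : ℝ → EuclideanSpace ℝ (Fin d)),
      (∀ s ∈ Icc (0:ℝ) L, HasDerivWithinAt w (w' s) (Icc 0 L) s) →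
      ContinuousOn w' (Icc 0 L) →
      (∫ s in (0:ℝ)..L, ⟪F s, w s⟫_ℝ) = ⟪n 0 + u, w 0⟫_ℝ - ⟪n L, w L⟫_ℝ := by
    intro w w' hw hw'
    have hwc : ContinuousOn w (Icc 0 L) := fun s hs => (hw s hs).continuousWithinAt
    -- integration by parts
    have ibp : (∫ s in (0:ℝ)..L, (⟪n s, w' s⟫_ℝ + ⟪n' s, w s⟫_ℝ))
        = ⟪n L, w L⟫_ℝ - ⟪n 0, w 0⟫_ℝ := by
      apply intervalIntegral.integral_eq_sub_of_hasDeriv_right_of_le hL.le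
        (hnc.inner hwc)
      · intro x hx
        have hx' : x ∈ Icc (0:ℝ) L := Ioo_subset_Icc_self hx
        have hmem : Icc (0:ℝ) L ∈ nhds x := Icc_mem_nhds hx.1 hx.2
        exact (((hn x hx').hasDerivAt hmem).inner ℝ
          ((hw x hx').hasDerivAt hmem)).hasDerivWithinAt
      · exact ContinuousOn.intervalIntegrable_of_Icc hL.le
          ((hnc.inner hw').add (hn'.inner hwc))
    have h1 : IntervalIntegrable (fun s => ⟪n s, w' s⟫_ℝ) volume 0 L :=
      ContinuousOn.intervalIntegrable_of_Icc hL.le (hnc.inner hw')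
    have h2 : IntervalIntegrable (fun s => ⟪n' s, w s⟫_ℝ) volume 0 L :=
      ContinuousOn.intervalIntegrable_of_Icc hL.le (hn'.inner hwc)
    have h3 : IntervalIntegrable (fun s => μ s * ⟪a s, w s⟫_ℝ) volume 0 L :=
      ContinuousOn.intervalIntegrable_of_Icc hL.le (hμc.mul (ha.inner hwc))
    have h4 : IntervalIntegrable (fun s => ⟪b s, w s⟫_ℝ) volume 0 L :=
      ContinuousOn.intervalIntegrable_of_Icc hL.le (hb.inner hwc)
    have hsum := intervalIntegral.integral_add h1 h2
    have hw0 := hweak w w' hw hw'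
    have expand : (∫ s in (0:ℝ)..L, ⟪F s, w s⟫_ℝ)
        = (∫ s in (0:ℝ)..L, (μ s * ⟪a s, w s⟫_ℝ - ⟪n' s, w s⟫_ℝ - ⟪b s, w s⟫_ℝ)) := by
      apply intervalIntegral.integral_congr
      intro s hs
      simp only [hF, inner_sub_left, real_inner_smul_left]
    rw [expand, intervalIntegral.integral_sub (h3.sub h2) h4,
      intervalIntegral.integral_sub h3 h2]
    rw [ibp] at hsum
    have hnw' : (∫ s in (0:ℝ)..L, ⟪n s, w' s⟫_ℝ)
        = ⟪n L, w L⟫_ℝ - ⟪n 0, w 0⟫_ℝ - ∫ s in (0:ℝ)..L, ⟪n' s, w s⟫_ℝ := by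
      linarith [hsum]
    rw [hnw'] at hw0
    have hadd : ⟪n 0 + u, w 0⟫_ℝ = ⟪n 0, w 0⟫_ℝ + ⟪u, w 0⟫_ℝ := inner_add_left _ _ _
    linarith [hw0, hadd]
  -- Step 1: F = 0 on Icc 0 L.
  have hF0 : ∀ s ∈ Icc (0:ℝ) L, F s = 0 := by
    have key : ∀ v : EuclideanSpace ℝ (Fin d), ∀ s ∈ Icc (0:ℝ) L, ⟪F s, v⟫_ℝ = 0 := by
      intro v
      set h : ℝ → ℝ := fun s => ⟪F s, v⟫_ℝ with hh
      have hhc : ContinuousOn h (Icc 0 L) := hFc.inner continuousOn_const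
      have hae : ∀ᵐ x ∂(volume : Measure ℝ), x ∈ Ioo (0:ℝ) L → h x = 0 := by
        apply isOpen_Ioo.ae_eq_zero_of_integral_contDiff_smul_eq_zero
        · exact ((hhc.integrableOn_Icc).mono_set Ioo_subset_Icc_self).locallyIntegrableOn
        · intro g hg hgsupp hgsub
          have hg0 : g 0 = 0 := by
            apply image_eq_zero_of_notMem_tsupport
            intro hmem
            exact absurd (hgsub hmem) (by simp)
          have hgL : g L = 0 := by
            apply image_eq_zero_of_notMem_tsupport
            intro hmem
            exact absurd (hgsub hmem) (by simp)
          have hgd : ∀ x : ℝ, HasDerivAt g (deriv g x) x := fun x =>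
            ((hg.differentiable (by simp)).differentiableAt).hasDerivAt
          have hgdc : Continuous (deriv g) := hg.continuous_deriv (by exact_mod_cast le_top)
          set w : ℝ → EuclideanSpace ℝ (Fin d) := fun s => g s • v with hwdef
          set w' : ℝ → EuclideanSpace ℝ (Fin d) := fun s => deriv g s • v with hw'def
          have hw : ∀ s ∈ Icc (0:ℝ) L, HasDerivWithinAt w (w' s) (Icc 0 L) s :=
            fun s _ => ((hgd s).smul_const v).hasDerivWithinAt
          have hw'c : ContinuousOn w' (Icc 0 L) := (hgdc.smul continuous_const).continuousOn
          have hmain := main w w' hw hw'c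
          have hzero : (∫ s in (0:ℝ)..L, ⟪F s, w s⟫_ℝ) = 0 := by
            rw [hmain, hwdef]
            simp [hg0, hgL]
          have heq : (fun x => g x • h x) = (Ioo (0:ℝ) L).indicator (fun x => g x • h x) := by
            funext x
            by_cases hx : x ∈ Ioo (0:ℝ) L
            · rw [indicator_of_mem hx]
            · rw [indicator_of_notMem hx]
              have : g x = 0 := image_eq_zero_of_notMem_tsupport (fun hmem => hx (hgsub hmem))
              simp [this]
          calc (∫ x : ℝ, g x • h x)
              = ∫ x : ℝ, (Ioo (0:ℝ) L).indicator (fun x => g x • h x) x := by rw [← heq]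
            _ = ∫ x in Ioo (0:ℝ) L, g x • h x := integral_indicator measurableSet_Ioo
            _ = ∫ x in Ioc (0:ℝ) L, g x • h x := (integral_Ioc_eq_integral_Ioo).symm
            _ = ∫ x in (0:ℝ)..L, g x • h x := (intervalIntegral.integral_of_le hL.le).symm
            _ = ∫ s in (0:ℝ)..L, ⟪F s, w s⟫_ℝ := by
                apply intervalIntegral.integral_congr
                intro s _
                simp only [hwdef, hh, smul_eq_mul]
                rw [real_inner_smul_right]
            _ = 0 := hzero
      -- From a.e. zero on the open interval to everywhere zero on Ioo.
      have hIoo : ∀ s ∈ Ioo (0:ℝ) L, h s = 0 := by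
        intro s hs
        by_contra hne
        have hcIoo : ContinuousOn h (Ioo 0 L) := hhc.mono Ioo_subset_Icc_self
        have hopen : IsOpen (Ioo (0:ℝ) L ∩ h ⁻¹' ({0}ᶜ)) :=
          hcIoo.isOpen_inter_preimage isOpen_Ioo (isOpen_compl_singleton)
        have hnull : volume (Ioo (0:ℝ) L ∩ h ⁻¹' ({0}ᶜ)) = 0 := by
          refine measure_mono_null ?_ (ae_iff.mp hae)
          intro x hx
          simp only [Set.mem_setOf_eq]
          intro hximp
          exact hx.2 (hximp hx.1)
        have hpos : 0 < volume (Ioo (0:ℝ) L ∩ h ⁻¹' ({0}ᶜ)) :=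
          hopen.measure_pos volume ⟨s, hs, hne⟩
        exact hpos.ne' hnull
      -- Extend by continuity to the closed interval.
      intro s hs
      have hclosed : IsClosed (Icc (0:ℝ) L ∩ h ⁻¹' {0}) :=
        hhc.preimage_isClosed_of_isClosed isClosed_Icc isClosed_singleton
      have hsub : Ioo (0:ℝ) L ⊆ Icc (0:ℝ) L ∩ h ⁻¹' {0} := fun x hx =>
        ⟨Ioo_subset_Icc_self hx, hIoo x hx⟩
      have h5 : closure (Ioo (0:ℝ) L) ⊆ Icc (0:ℝ) L ∩ h ⁻¹' {0} :=
        hclosed.closure_subset_iff.mpr hsub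
      rw [closure_Ioo hL.ne] at h5
      exact (h5 hs).2
    intro s hs
    have hk := key (F s) s hs
    rwa [inner_self_eq_zero] at hk
  -- Step 2: boundary conditions.
  have hzeroint : ∀ (w w' : ℝ → EuclideanSpace ℝ (Fin d)),
      (∀ s ∈ Icc (0:ℝ) L, HasDerivWithinAt w (w' s) (Icc 0 L) s) →
      ContinuousOn w' (Icc 0 L) →
      (0:ℝ) = ⟪n 0 + u, w 0⟫_ℝ - ⟪n L, w L⟫_ℝ := by
    intro w w' hw hw'
    have hm := main w w' hw hw'
    rw [← hm]
    rw [intervalIntegral.integral_congr (g := fun _ => (0:ℝ))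
      (fun s hs => by rw [hF0 s ((uIcc_of_le hL.le) ▸ hs)]; simp)]
    simp
  have hbd1 : ∀ v : EuclideanSpace ℝ (Fin d), ⟪n 0 + u - n L, v⟫_ℝ = 0 := by
    intro v
    have hz := hzeroint (fun _ => v) (fun _ => 0)
      (fun s _ => hasDerivWithinAt_const s _ v) continuousOn_const
    simp only [inner_sub_left]
    linarith [hz]
  have hbd2 : n L = 0 := by
    have hv : ∀ v : EuclideanSpace ℝ (Fin d), ⟪n L, v⟫_ℝ = 0 := by
      intro v
      have hid : ∀ s ∈ Icc (0:ℝ) L, HasDerivWithinAt (fun s : ℝ => s • v)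
          ((fun _ : ℝ => v) s) (Icc 0 L) s := by
        intro s _
        simpa using ((hasDerivAt_id s).smul_const v).hasDerivWithinAt
      have hz := hzeroint (fun s => s • v) (fun _ => v) hid continuousOn_const
      simp only [zero_smul, inner_zero_right, real_inner_smul_right] at hz
      have hL0 : L * ⟪n L, v⟫_ℝ = 0 := by linarith
      exact (mul_eq_zero.mp hL0).resolve_left hL.ne'
    have h0 := hv (n L)
    rwa [inner_self_eq_zero] at h0
  have hbd0 : n 0 = -u := by
    have h := hbd1 (n 0 + u - n L)
    rw [inner_self_eq_zero, hbd2, sub_zero] at h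
    exact eq_neg_of_add_eq_zero_left h
  refine ⟨?_, hbd0, hbd2⟩
  intro s hs
  have h2 : μ s • a s - n' s - b s = 0 := hF0 s hs
  rw [sub_sub, sub_eq_zero] at h2
  exact h2
end

section
/- Let r, δr : [t_i,t_e] → ℝⁿ be twice continuously differentiable, u, δu : [t_i,t_e] → ℝᵐ continuous, and w, δw : [t_i,t_e] → ℝⁿ continuous. Define φ : ℝ → ℝ by φ(ε) = J(r + ε δr, u + ε δu, w + ε δw). Then φ is differentiable at ε = 0 with φ'(0) = ∫_{t_i}^{t_e} [ ⟨δu(t), u(t) + Gᵀ w(t)⟩ + ⟨δw(t), -M r̈(t) - k(r(t)) + b(t) + G u(t)⟩ + ⟨δr(t), α Cᵀ(C r(t) - y_d(t)) - (Dk(r(t)))ᵀ w(t)⟩ - ⟨δr̈(t), M w(t)⟩ ] dt. -/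
open Set Matrix MeasureTheory

private lemma contOn_dot {X : Type*} [TopologicalSpace X] {n : ℕ}
    {f g : X → Fin n → ℝ} {s : Set X} (hf : ContinuousOn f s) (hg : ContinuousOn g s) :
    ContinuousOn (fun x => f x ⬝ᵥ g x) s := by
  simp only [dotProduct]
  exact continuousOn_finset_sum _ fun i _ =>
    ((continuous_apply i).comp_continuousOn hf).mul ((continuous_apply i).comp_continuousOn hg)

private lemma contOn_mulVec {X : Type*} [TopologicalSpace X] {n q : ℕ}
    {A : X → Matrix (Fin q) (Fin n) ℝ} {f : X → Fin n → ℝ} {s : Set X}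
    (hA : ContinuousOn A s) (hf : ContinuousOn f s) :
    ContinuousOn (fun x => A x *ᵥ f x) s := by
  rw [continuousOn_pi]
  intro i
  exact contOn_dot ((continuous_apply i).comp_continuousOn hA) hf

private lemma hasDerivAt_dot {n : ℕ} {f g : ℝ → Fin n → ℝ} {f' g' : Fin n → ℝ} {x : ℝ}
    (hf : HasDerivAt f f' x) (hg : HasDerivAt g g' x) :
    HasDerivAt (fun ε => f ε ⬝ᵥ g ε) (f' ⬝ᵥ g x + f x ⬝ᵥ g') x := by
  simp only [dotProduct]
  rw [← Finset.sum_add_distrib]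
  exact HasDerivAt.fun_sum fun i _ => (hasDerivAt_pi.mp hf i).mul (hasDerivAt_pi.mp hg i)

private lemma hasDerivAt_mulVec' {n q : ℕ} (A : Matrix (Fin q) (Fin n) ℝ) {f : ℝ → Fin n → ℝ}
    {f' : Fin n → ℝ} {x : ℝ} (hf : HasDerivAt f f' x) :
    HasDerivAt (fun ε => A *ᵥ f ε) (A *ᵥ f') x := by
  rw [hasDerivAt_pi]
  intro i
  have := hasDerivAt_dot (hasDerivAt_const x (A i)) hf
  simp only [zero_dotProduct, zero_add] at this
  exact this

private lemma dot_mulVec_comm {a c : ℕ} (A : Matrix (Fin a) (Fin c) ℝ) (v : Fin a → ℝ)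
    (x : Fin c → ℝ) : v ⬝ᵥ (A *ᵥ x) = x ⬝ᵥ (Aᵀ *ᵥ v) := by
  rw [dotProduct_mulVec, dotProduct_comm, mulVec_transpose]

set_option linter.unusedVariables false
set_option maxHeartbeats 1000000

/-- Gateaux derivative of the Lagrange functional
`J(r,u,w) = ∫ [½⟨u,u⟩ + (α/2)⟨Cr - y_d, Cr - y_d⟩ + ⟨w, -M r̈ - k(r) + b + G u⟩] dt`
of the semi-discrete string model: `φ(ε) = J(r + ε δr, u + ε δu, w + ε δw)` is
differentiable at `ε = 0` with the stated first variation. -/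
theorem lagrange_functional_first_variation
    {n m p : ℕ} {ti te : ℝ} (hti : ti < te)
    (M : Matrix (Fin n) (Fin n) ℝ) (hMsymm : M.IsSymm) (hMpd : M.PosDef)
    (k : (Fin n → ℝ) → (Fin n → ℝ)) (k' : (Fin n → ℝ) → Matrix (Fin n) (Fin n) ℝ)
    (hk : ∀ x, HasFDerivAt k (LinearMap.toContinuousLinearMap (k' x).mulVecLin) x)
    (hk' : Continuous k')
    (G : Matrix (Fin n) (Fin m) ℝ) (C : Matrix (Fin p) (Fin n) ℝ)
    {α : ℝ} (hα : 0 < α)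
    (b : ℝ → Fin n → ℝ) (hb : ContinuousOn b (Icc ti te))
    (yd : ℝ → Fin p → ℝ) (hyd : ContinuousOn yd (Icc ti te))
    (r r' r'' : ℝ → Fin n → ℝ)
    (hr : ∀ t ∈ Icc ti te, HasDerivWithinAt r (r' t) (Icc ti te) t)
    (hr' : ∀ t ∈ Icc ti te, HasDerivWithinAt r' (r'' t) (Icc ti te) t)
    (hr'' : ContinuousOn r'' (Icc ti te))
    (δr δr' δr'' : ℝ → Fin n → ℝ)
    (hδr : ∀ t ∈ Icc ti te, HasDerivWithinAt δr (δr' t) (Icc ti te) t)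
    (hδr' : ∀ t ∈ Icc ti te, HasDerivWithinAt δr' (δr'' t) (Icc ti te) t)
    (hδr'' : ContinuousOn δr'' (Icc ti te))
    (u δu : ℝ → Fin m → ℝ)
    (hu : ContinuousOn u (Icc ti te)) (hδu : ContinuousOn δu (Icc ti te))
    (w δw : ℝ → Fin n → ℝ)
    (hw : ContinuousOn w (Icc ti te)) (hδw : ContinuousOn δw (Icc ti te)) :
    HasDerivAt
      (fun ε : ℝ => ∫ t in ti..te,
        ((1 / 2) * ((u t + ε • δu t) ⬝ᵥ (u t + ε • δu t))
          + (α / 2) * ((C *ᵥ (r t + ε • δr t) - yd t) ⬝ᵥ (C *ᵥ (r t + ε • δr t) - yd t))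
          + (w t + ε • δw t) ⬝ᵥ
              (-(M *ᵥ (r'' t + ε • δr'' t)) - k (r t + ε • δr t) + b t
                + G *ᵥ (u t + ε • δu t))))
      (∫ t in ti..te,
        (δu t ⬝ᵥ (u t + Gᵀ *ᵥ w t)
          + δw t ⬝ᵥ (-(M *ᵥ r'' t) - k (r t) + b t + G *ᵥ u t)
          + δr t ⬝ᵥ (α • (Cᵀ *ᵥ (C *ᵥ r t - yd t)) - (k' (r t))ᵀ *ᵥ w t)
          - δr'' t ⬝ᵥ (M *ᵥ w t)))
      0 := by
  have hle : ti ≤ te := hti.le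
  have hkc : Continuous k := continuous_iff_continuousAt.mpr fun x => (hk x).continuousAt
  have hrC : ContinuousOn r (Icc ti te) := fun t ht => (hr t ht).continuousWithinAt
  have hδrC : ContinuousOn δr (Icc ti te) := fun t ht => (hδr t ht).continuousWithinAt
  -- the integrand and its ε-derivative
  obtain ⟨F, hFdef⟩ : ∃ F : ℝ → ℝ → ℝ, F = fun ε t =>
    ((1 / 2) * ((u t + ε • δu t) ⬝ᵥ (u t + ε • δu t))
      + (α / 2) * ((C *ᵥ (r t + ε • δr t) - yd t) ⬝ᵥ (C *ᵥ (r t + ε • δr t) - yd t))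
      + (w t + ε • δw t) ⬝ᵥ
          (-(M *ᵥ (r'' t + ε • δr'' t)) - k (r t + ε • δr t) + b t
            + G *ᵥ (u t + ε • δu t))) := ⟨_, rfl⟩
  obtain ⟨F', hF'def⟩ : ∃ F' : ℝ → ℝ → ℝ, F' = fun ε t =>
    δu t ⬝ᵥ (u t + ε • δu t)
    + α * ((C *ᵥ δr t) ⬝ᵥ (C *ᵥ (r t + ε • δr t) - yd t))
    + δw t ⬝ᵥ (-(M *ᵥ (r'' t + ε • δr'' t)) - k (r t + ε • δr t) + b t
        + G *ᵥ (u t + ε • δu t))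
    + (w t + ε • δw t) ⬝ᵥ (-(M *ᵥ δr'' t) - (k' (r t + ε • δr t)) *ᵥ δr t + G *ᵥ δu t) :=
    ⟨_, rfl⟩
  -- pointwise differentiability in ε
  have hdiff : ∀ (t : ℝ) (x : ℝ), HasDerivAt (fun ε => F ε t) (F' x t) x := by
    intro t x
    simp only [hFdef, hF'def]
    have huε : HasDerivAt (fun ε : ℝ => u t + ε • δu t) (δu t) x := by
      simpa using ((hasDerivAt_id x).smul_const (δu t)).const_add (u t)
    have hrε : HasDerivAt (fun ε : ℝ => r t + ε • δr t) (δr t) x := by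
      simpa using ((hasDerivAt_id x).smul_const (δr t)).const_add (r t)
    have hr''ε : HasDerivAt (fun ε : ℝ => r'' t + ε • δr'' t) (δr'' t) x := by
      simpa using ((hasDerivAt_id x).smul_const (δr'' t)).const_add (r'' t)
    have hwε : HasDerivAt (fun ε : ℝ => w t + ε • δw t) (δw t) x := by
      simpa using ((hasDerivAt_id x).smul_const (δw t)).const_add (w t)
    have hCr : HasDerivAt (fun ε : ℝ => C *ᵥ (r t + ε • δr t) - yd t) (C *ᵥ δr t) x :=
      (hasDerivAt_mulVec' C hrε).sub_const (yd t)
    have hkd : HasDerivAt (fun ε : ℝ => k (r t + ε • δr t))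
        ((k' (r t + x • δr t)) *ᵥ δr t) x := by
      have := (hk (r t + x • δr t)).comp_hasDerivAt x hrε
      simp at this
      exact this
    have hB : HasDerivAt (fun ε : ℝ =>
        -(M *ᵥ (r'' t + ε • δr'' t)) - k (r t + ε • δr t) + b t + G *ᵥ (u t + ε • δu t))
        (-(M *ᵥ δr'' t) - (k' (r t + x • δr t)) *ᵥ δr t + G *ᵥ δu t) x :=
      (((hasDerivAt_mulVec' M hr''ε).neg.sub hkd).add_const (b t)).add
        (hasDerivAt_mulVec' G huε)
    have t1 := (hasDerivAt_dot huε huε).const_mul (1 / 2 : ℝ)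
    have t2 := (hasDerivAt_dot hCr hCr).const_mul (α / 2 : ℝ)
    have t3 := hasDerivAt_dot hwε hB
    have total := (t1.add t2).add t3
    refine total.congr_deriv ?_
    rw [dotProduct_comm (u t + x • δu t) (δu t),
      dotProduct_comm (C *ᵥ (r t + x • δr t) - yd t) (C *ᵥ δr t)]
    ring
  -- joint continuity of F and F' on ℝ × [ti,te]
  set s : Set (ℝ × ℝ) := (univ : Set ℝ) ×ˢ Icc ti te with hsdef
  have hmem : ∀ q : ℝ × ℝ, q ∈ s → q.2 ∈ Icc ti te := fun q hq => hq.2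
  have hsndC : ∀ {g : ℝ → Fin m → ℝ}, ContinuousOn g (Icc ti te) →
      ContinuousOn (fun q : ℝ × ℝ => g q.2) s := fun hg =>
    hg.comp continuous_snd.continuousOn hmem
  have hsndC' : ∀ {g : ℝ → Fin n → ℝ}, ContinuousOn g (Icc ti te) →
      ContinuousOn (fun q : ℝ × ℝ => g q.2) s := fun hg =>
    hg.comp continuous_snd.continuousOn hmem
  have hsndC'' : ∀ {g : ℝ → Fin p → ℝ}, ContinuousOn g (Icc ti te) →
      ContinuousOn (fun q : ℝ × ℝ => g q.2) s := fun hg =>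
    hg.comp continuous_snd.continuousOn hmem
  have cfst : ContinuousOn (fun q : ℝ × ℝ => q.1) s := continuous_fst.continuousOn
  have cuε : ContinuousOn (fun q : ℝ × ℝ => u q.2 + q.1 • δu q.2) s :=
    (hsndC hu).add (cfst.smul (hsndC hδu))
  have crε : ContinuousOn (fun q : ℝ × ℝ => r q.2 + q.1 • δr q.2) s :=
    (hsndC' hrC).add (cfst.smul (hsndC' hδrC))
  have cr''ε : ContinuousOn (fun q : ℝ × ℝ => r'' q.2 + q.1 • δr'' q.2) s :=
    (hsndC' hr'').add (cfst.smul (hsndC' hδr''))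
  have cwε : ContinuousOn (fun q : ℝ × ℝ => w q.2 + q.1 • δw q.2) s :=
    (hsndC' hw).add (cfst.smul (hsndC' hδw))
  have ckε : ContinuousOn (fun q : ℝ × ℝ => k (r q.2 + q.1 • δr q.2)) s :=
    hkc.comp_continuousOn crε
  have ck'ε : ContinuousOn (fun q : ℝ × ℝ => k' (r q.2 + q.1 • δr q.2)) s :=
    hk'.comp_continuousOn crε
  have cB : ContinuousOn (fun q : ℝ × ℝ =>
      -(M *ᵥ (r'' q.2 + q.1 • δr'' q.2)) - k (r q.2 + q.1 • δr q.2) + b q.2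
        + G *ᵥ (u q.2 + q.1 • δu q.2)) s :=
    (((contOn_mulVec continuousOn_const cr''ε).neg.sub ckε).add (hsndC' hb)).add
      (contOn_mulVec continuousOn_const cuε)
  have cCrε : ContinuousOn (fun q : ℝ × ℝ => C *ᵥ (r q.2 + q.1 • δr q.2) - yd q.2) s :=
    (contOn_mulVec continuousOn_const crε).sub (hsndC'' hyd)
  have cFjoint : ContinuousOn (fun q : ℝ × ℝ => F q.1 q.2) s := by
    simp only [hFdef]
    exact ((continuousOn_const.mul (contOn_dot cuε cuε)).add
      (continuousOn_const.mul (contOn_dot cCrε cCrε))).add (contOn_dot cwε cB)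
  have cF'joint : ContinuousOn (fun q : ℝ × ℝ => F' q.1 q.2) s := by
    simp only [hF'def]
    exact (((contOn_dot (hsndC hδu) cuε).add
      (continuousOn_const.mul
        (contOn_dot (contOn_mulVec continuousOn_const (hsndC' hδrC)) cCrε))).add
      (contOn_dot (hsndC' hδw) cB)).add
      (contOn_dot cwε (((contOn_mulVec continuousOn_const (hsndC' hδr'')).neg.sub
          (contOn_mulVec ck'ε (hsndC' hδrC))).add
        (contOn_mulVec continuousOn_const (hsndC hδu))))
  -- continuity in t for fixed ε
  have cFt : ∀ x : ℝ, ContinuousOn (fun t => F x t) (Icc ti te) := by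
    intro x
    have : ContinuousOn (fun t : ℝ => ((x, t) : ℝ × ℝ)) (Icc ti te) :=
      (continuous_const.prodMk continuous_id).continuousOn
    exact ContinuousOn.comp (g := fun q : ℝ × ℝ => F q.1 q.2)
      (f := fun t : ℝ => ((x, t) : ℝ × ℝ)) cFjoint this (fun t ht => ⟨mem_univ _, ht⟩)
  have cF't : ∀ x : ℝ, ContinuousOn (fun t => F' x t) (Icc ti te) := by
    intro x
    have : ContinuousOn (fun t : ℝ => ((x, t) : ℝ × ℝ)) (Icc ti te) :=
      (continuous_const.prodMk continuous_id).continuousOn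
    exact ContinuousOn.comp (g := fun q : ℝ × ℝ => F' q.1 q.2)
      (f := fun t : ℝ => ((x, t) : ℝ × ℝ)) cF'joint this (fun t ht => ⟨mem_univ _, ht⟩)
  -- bound on the compact set closedBall 0 1 × Icc
  obtain ⟨Bd, hBd⟩ := ((isCompact_closedBall (0 : ℝ) 1).prod isCompact_Icc
    ).exists_bound_of_continuousOn
    (cF'joint.mono (fun q hq => ⟨mem_univ _, hq.2⟩))
  have key := intervalIntegral.hasDerivAt_integral_of_dominated_loc_of_deriv_le
    (F := F) (F' := F') (x₀ := (0 : ℝ)) (a := ti) (b := te) (μ := volume)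
    (bound := fun _ => Bd) (s := Metric.ball 0 1) (Metric.ball_mem_nhds 0 one_pos)
    (Filter.Eventually.of_forall fun x =>
      ((cFt x).mono (by rw [uIoc_of_le hle]; exact Ioc_subset_Icc_self)
        ).aestronglyMeasurable measurableSet_uIoc)
    (((cFt 0).mono (by rw [uIcc_of_le hle])).intervalIntegrable)
    (((cF't 0).mono (by rw [uIoc_of_le hle]; exact Ioc_subset_Icc_self)
        ).aestronglyMeasurable measurableSet_uIoc)
    (Filter.Eventually.of_forall fun t ht x hx =>
      hBd (x, t) ⟨Metric.ball_subset_closedBall hx,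
        Ioc_subset_Icc_self (by rwa [uIoc_of_le hle] at ht)⟩)
    intervalIntegrable_const
    (Filter.Eventually.of_forall fun t _ x _ => hdiff t x)
  have heq : (∫ t in ti..te,
        (δu t ⬝ᵥ (u t + Gᵀ *ᵥ w t)
          + δw t ⬝ᵥ (-(M *ᵥ r'' t) - k (r t) + b t + G *ᵥ u t)
          + δr t ⬝ᵥ (α • (Cᵀ *ᵥ (C *ᵥ r t - yd t)) - (k' (r t))ᵀ *ᵥ w t)
          - δr'' t ⬝ᵥ (M *ᵥ w t))) = ∫ t in ti..te, F' 0 t := by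
    refine intervalIntegral.integral_congr fun t _ => ?_
    have e1 : δu t ⬝ᵥ (Gᵀ *ᵥ w t) = w t ⬝ᵥ (G *ᵥ δu t) := by
      rw [dot_mulVec_comm, transpose_transpose]
    have e2 : δr t ⬝ᵥ (Cᵀ *ᵥ (C *ᵥ r t - yd t)) = (C *ᵥ δr t) ⬝ᵥ (C *ᵥ r t - yd t) := by
      rw [dot_mulVec_comm, transpose_transpose, dotProduct_comm]
    have e3 : δr t ⬝ᵥ ((k' (r t))ᵀ *ᵥ w t) = w t ⬝ᵥ (k' (r t) *ᵥ δr t) := by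
      rw [dot_mulVec_comm, transpose_transpose]
    have e4 : δr'' t ⬝ᵥ (M *ᵥ w t) = w t ⬝ᵥ (M *ᵥ δr'' t) := by
      rw [dot_mulVec_comm, hMsymm.eq]
    simp only [hF'def, zero_smul, add_zero, dotProduct_add, dotProduct_sub,
      dotProduct_smul, dotProduct_neg, smul_eq_mul, e1, e2, e3, e4]
    ring
  have hgoalfun : (fun ε : ℝ => ∫ t in ti..te,
      ((1 / 2) * ((u t + ε • δu t) ⬝ᵥ (u t + ε • δu t))
        + (α / 2) * ((C *ᵥ (r t + ε • δr t) - yd t) ⬝ᵥ (C *ᵥ (r t + ε • δr t) - yd t))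
        + (w t + ε • δw t) ⬝ᵥ
            (-(M *ᵥ (r'' t + ε • δr'' t)) - k (r t + ε • δr t) + b t
              + G *ᵥ (u t + ε • δu t))))
      = fun ε : ℝ => ∫ t in ti..te, F ε t := by simp only [hFdef]
  rw [hgoalfun, heq]
  exact key.2
end

section
/- Let r : [t_i,t_e] → ℝⁿ be continuous, w : [t_i,t_e] → ℝⁿ twice continuously differentiable, and y_d : [t_i,t_e] → ℝᵖ continuous. Suppose that for every twice continuously differentiable δr : [t_i,t_e] → ℝⁿ with δr(t_i) = δr(t_e) = 0 and δṙ(t_i) = δṙ(t_e) = 0 one has ∫_{t_i}^{t_e} [ ⟨δr(t), α Cᵀ(C r(t) - y_d(t)) - (Dk(r(t)))ᵀ w(t)⟩ - ⟨δr̈(t), M w(t)⟩ ] dt = 0. Then the adjoint equation M ẅ(t) = -(Dk(r(t)))ᵀ w(t) + α Cᵀ(C r(t) - y_d(t)) holds for every t ∈ [t_i,t_e]. (Third optimality condition.) -/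
open Set Matrix Filter Topology
open scoped ContDiff

set_option linter.unusedVariables false


-- helper: derivative of dot product
lemma hasDerivWithinAt_dot {n : ℕ} {f g : ℝ → Fin n → ℝ} {f' g' : Fin n → ℝ} {s : Set ℝ} {t : ℝ}
    (hf : HasDerivWithinAt f f' s t) (hg : HasDerivWithinAt g g' s t) :
    HasDerivWithinAt (fun u => f u ⬝ᵥ g u) (f' ⬝ᵥ g t + f t ⬝ᵥ g' ) s t := by
  simp only [dotProduct]
  rw [← Finset.sum_add_distrib]
  exact HasDerivWithinAt.fun_sum fun i _ =>
    (((ContinuousLinearMap.proj (R := ℝ) (φ := fun _ : Fin n => ℝ) i).hasFDerivAt.comp_hasDerivWithinAt t hf).mul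
      ((ContinuousLinearMap.proj (R := ℝ) (φ := fun _ : Fin n => ℝ) i).hasFDerivAt.comp_hasDerivWithinAt t hg))

-- helper: derivative of constant-matrix mulVec
lemma hasDerivWithinAt_mulVec {n m : ℕ} (A : Matrix (Fin m) (Fin n) ℝ) {w : ℝ → Fin n → ℝ}
    {v : Fin n → ℝ} {s : Set ℝ} {t : ℝ} (hw : HasDerivWithinAt w v s t) :
    HasDerivWithinAt (fun u => A *ᵥ w u) (A *ᵥ v) s t := by
  have := (LinearMap.toContinuousLinearMap A.mulVecLin).hasFDerivAt.comp_hasDerivWithinAt t hw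
  exact this

-- helper: continuity of mulVec with varying matrix
lemma continuousOn_mulVec {n m : ℕ} {s : Set ℝ} {A : ℝ → Matrix (Fin m) (Fin n) ℝ}
    {v : ℝ → Fin n → ℝ} (hA : ContinuousOn A s) (hv : ContinuousOn v s) :
    ContinuousOn (fun t => A t *ᵥ v t) s := by
  apply continuousOn_pi.2
  intro j
  simp only [mulVec, dotProduct]
  apply continuousOn_finset_sum
  intro l _
  exact (((continuous_apply l).comp (continuous_apply j)).comp_continuousOn hA).mul
    ((continuous_apply l).comp_continuousOn hv)

-- helper: continuity of dot product
lemma continuousOn_dot {n : ℕ} {s : Set ℝ} {f g : ℝ → Fin n → ℝ}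
    (hf : ContinuousOn f s) (hg : ContinuousOn g s) :
    ContinuousOn (fun t => f t ⬝ᵥ g t) s := by
  simp only [dotProduct]
  apply continuousOn_finset_sum
  intro l _
  exact ((continuous_apply l).comp_continuousOn hf).mul ((continuous_apply l).comp_continuousOn hg)
lemma fundamental_lemma {n : ℕ} {ti te : ℝ} (hti : ti < te) (F : ℝ → Fin n → ℝ)
    (hF : ContinuousOn F (Icc ti te))
    (hvar : ∀ δr δr' δr'' : ℝ → Fin n → ℝ,
      (∀ t ∈ Icc ti te, HasDerivWithinAt δr (δr' t) (Icc ti te) t) →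
      (∀ t ∈ Icc ti te, HasDerivWithinAt δr' (δr'' t) (Icc ti te) t) →
      ContinuousOn δr'' (Icc ti te) →
      δr ti = 0 → δr te = 0 → δr' ti = 0 → δr' te = 0 →
      (∫ t in ti..te, δr t ⬝ᵥ F t) = 0) :
    ∀ t ∈ Icc ti te, F t = 0 := by
  -- component continuity
  have hFi : ∀ i : Fin n, ContinuousOn (fun t => F t i) (Icc ti te) := fun i =>
    (continuous_apply i).comp_continuousOn hF
  -- step 1: F vanishes on the open interval
  have interior_zero : ∀ t0 ∈ Ioo ti te, ∀ i : Fin n, F t0 i = 0 := by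
    intro t0 ht0 i
    by_contra hc
    set c : ℝ := F t0 i with hcdef
    -- eventually c * F t i > c^2/2 near t0
    have hcont : ContinuousAt (fun t => F t i) t0 := by
      have : Icc ti te ∈ 𝓝 t0 := mem_of_superset (isOpen_Ioo.mem_nhds ht0) Ioo_subset_Icc_self
      exact (hFi i).continuousAt this
    have hev : ∀ᶠ t in 𝓝 t0, c ^ 2 / 2 < c * F t i := by
      have hca : ContinuousAt (fun t => c * F t i) t0 := continuousAt_const.mul hcont
      have h2 : c ^ 2 / 2 < c * F t0 i := by
        have h0 : 0 < c ^ 2 := by positivity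
        have he : c * F t0 i = c ^ 2 := by rw [hcdef]; ring
        linarith
      exact hca.eventually (eventually_gt_nhds h2)
    have hev2 : ∀ᶠ t in 𝓝 t0, t ∈ Ioo ti te ∧ c ^ 2 / 2 < c * F t i :=
      ((isOpen_Ioo.eventually_mem ht0).and hev : _)
    obtain ⟨ε, hε, hball⟩ := Metric.eventually_nhds_iff.mp hev2
    -- bump function
    set f : ContDiffBump t0 := ⟨ε / 4, ε / 2, by positivity, by linarith⟩ with hfdef
    have hrIn : f.rIn = ε / 4 := rfl
    have hrOut : f.rOut = ε / 2 := rfl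
    set φ : ℝ → ℝ := fun t => f t with hφdef
    have hφC : ContDiff ℝ ∞ φ := f.contDiff
    have hφd : Differentiable ℝ φ := hφC.differentiable (by norm_num)
    have hφ'C : ContDiff ℝ ∞ (deriv φ) := (contDiff_infty_iff_deriv.mp hφC).2
    have hφ'd : Differentiable ℝ (deriv φ) := hφ'C.differentiable (by norm_num)
    have hφ''c : Continuous (deriv (deriv φ)) := (contDiff_infty_iff_deriv.mp hφ'C).2.continuous
    -- φ vanishes on a neighborhood of any point at distance ≥ ε from t0
    have hvanish : ∀ x : ℝ, ε ≤ dist x t0 → φ x = 0 := fun x hx =>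
      f.zero_of_le_dist (by rw [hrOut]; linarith)
    have hvanish' : ∀ x : ℝ, ε ≤ dist x t0 → deriv φ x = 0 := by
      intro x hx
      have hev0 : φ =ᶠ[𝓝 x] (fun _ => (0:ℝ)) := by
        refine Metric.eventually_nhds_iff.mpr ⟨ε / 2, by positivity, fun y hy => ?_⟩
        refine f.zero_of_le_dist ?_
        rw [hrOut]
        have h := dist_triangle x y t0
        rw [dist_comm x y] at h
        linarith
      rw [hev0.deriv_eq, deriv_const]
    -- endpoints are far from t0
    have hfar : ∀ x : ℝ, x ∉ Ioo ti te → ε ≤ dist x t0 := by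
      intro x hx
      by_contra h
      exact hx (hball (by rwa [not_le] at h)).1
    have hti_far := hfar ti (by simp [lt_irrefl])
    have hte_far := hfar te (by simp [lt_irrefl])
    -- the variation
    set e : Fin n → ℝ := Pi.single i 1 with hedef
    set δr : ℝ → Fin n → ℝ := fun t => (c * φ t) • e with hδrdef
    set δr' : ℝ → Fin n → ℝ := fun t => (c * deriv φ t) • e with hδr'def
    set δr'' : ℝ → Fin n → ℝ := fun t => (c * deriv (deriv φ) t) • e with hδr''def
    have h1 : ∀ t ∈ Icc ti te, HasDerivWithinAt δr (δr' t) (Icc ti te) t := fun t _ =>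
      ((((hφd t).hasDerivAt).const_mul c).smul_const e).hasDerivWithinAt
    have h2 : ∀ t ∈ Icc ti te, HasDerivWithinAt δr' (δr'' t) (Icc ti te) t := fun t _ =>
      ((((hφ'd t).hasDerivAt).const_mul c).smul_const e).hasDerivWithinAt
    have h3 : ContinuousOn δr'' (Icc ti te) :=
      ((continuous_const.mul hφ''c).smul continuous_const).continuousOn
    have hInt := hvar δr δr' δr'' h1 h2 h3
      (by simp [hδrdef, hvanish ti hti_far]) (by simp [hδrdef, hvanish te hte_far])
      (by simp [hδr'def, hvanish' ti hti_far]) (by simp [hδr'def, hvanish' te hte_far])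
    -- rewrite the integrand
    have hinteg : ∀ t, δr t ⬝ᵥ F t = φ t * (c * F t i) := by
      intro t
      simp only [hδrdef, hedef, smul_dotProduct, single_dotProduct, one_mul, smul_eq_mul]
      ring
    rw [intervalIntegral.integral_congr (fun t _ => hinteg t)] at hInt
    -- the integrand is nonneg on [ti,te] and positive near t0
    set g : ℝ → ℝ := fun t => φ t * (c * F t i) with hgdef
    have hgnn : ∀ t, 0 ≤ g t := by
      intro t
      rcases lt_or_ge (dist t t0) ε with h | h
      · exact mul_nonneg f.nonneg (le_of_lt (lt_trans (by positivity) (hball h).2))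
      · simp [hgdef, hvanish t h]
    have hgc : ContinuousOn g (Icc ti te) :=
      (hφC.continuous.continuousOn).mul (continuousOn_const.mul (hFi i))
    -- split the integral
    have ht0mem : t0 ∈ Ioo ti te := ht0
    have ha : ti < t0 - ε / 4 := by
      by_contra h
      push_neg at h
      have : ε ≤ dist ti t0 := hti_far
      rw [Real.dist_eq, abs_of_nonpos (by linarith [ht0mem.1])] at this
      linarith
    have hb : t0 + ε / 4 < te := by
      by_contra h
      push_neg at h
      have : ε ≤ dist te t0 := hte_far
      rw [Real.dist_eq, abs_of_nonneg (by linarith [ht0mem.2])] at this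
      linarith
    have hIia : IntervalIntegrable g MeasureTheory.volume ti (t0 - ε / 4) :=
      (hgc.mono (by rw [uIcc_of_le (by linarith)]; exact Icc_subset_Icc le_rfl (by linarith))).intervalIntegrable
    have hIab : IntervalIntegrable g MeasureTheory.volume (t0 - ε / 4) (t0 + ε / 4) :=
      (hgc.mono (by rw [uIcc_of_le (by linarith)]; exact Icc_subset_Icc (by linarith) (by linarith))).intervalIntegrable
    have hIbe : IntervalIntegrable g MeasureTheory.volume (t0 + ε / 4) te :=
      (hgc.mono (by rw [uIcc_of_le (by linarith)]; exact Icc_subset_Icc (by linarith) le_rfl)).intervalIntegrable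
    have e1 := intervalIntegral.integral_add_adjacent_intervals hIia hIab
    have e2 := intervalIntegral.integral_add_adjacent_intervals (hIia.trans hIab) hIbe
    have hpos : 0 < ∫ t in (t0 - ε / 4)..(t0 + ε / 4), g t := by
      apply intervalIntegral.intervalIntegral_pos_of_pos_on hIab _ (by linarith)
      intro x hx
      have hdist : dist x t0 < ε / 4 := by
        rw [Real.dist_eq, abs_lt]
        constructor <;> [linarith [hx.1]; linarith [hx.2]]
      have hone : φ x = 1 := f.one_of_mem_closedBall (by
        rw [Metric.mem_closedBall, hrIn]; exact le_of_lt hdist)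
      have : c ^ 2 / 2 < c * F x i := (hball (by linarith)).2
      have hc2 : (0:ℝ) < c ^ 2 / 2 := by positivity
      simp only [hgdef, hone, one_mul]
      linarith
    have h1nn : 0 ≤ ∫ t in ti..(t0 - ε / 4), g t :=
      intervalIntegral.integral_nonneg (by linarith) (fun u _ => hgnn u)
    have h2nn : 0 ≤ ∫ t in (t0 + ε / 4)..te, g t :=
      intervalIntegral.integral_nonneg (by linarith) (fun u _ => hgnn u)
    have hInt' : (∫ t in ti..te, g t) = 0 := hInt
    linarith
  -- step 2: extend to the closed interval by continuity
  intro t ht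
  funext i
  have hne : (𝓝[Ioo ti te] t).NeBot :=
    mem_closure_iff_nhdsWithin_neBot.mp (by rw [closure_Ioo hti.ne]; exact ht)
  have htend1 : Filter.Tendsto (fun u => F u i) (𝓝[Ioo ti te] t) (𝓝 (F t i)) :=
    ((hFi i) t ht).mono Ioo_subset_Icc_self
  have htend2 : Filter.Tendsto (fun u => F u i) (𝓝[Ioo ti te] t) (𝓝 0) := by
    apply Filter.Tendsto.congr' _ tendsto_const_nhds
    filter_upwards [self_mem_nhdsWithin] with u hu
    exact (interior_zero u hu i).symm
  have : F t i = 0 := tendsto_nhds_unique htend1 htend2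
  simpa using this


/-- Third optimality condition: if the stationarity integral identity with respect to `r`
holds for every twice continuously differentiable variation `δr` vanishing together with
its time derivative at `t_i` and `t_e`, then the adjoint equation
`M ẅ = -(Dk(r))ᵀ w + α Cᵀ(C r - y_d)` holds on `[t_i, t_e]`. -/
theorem third_optimality_condition
    {n p : ℕ} {ti te : ℝ} (hti : ti < te)
    (M : Matrix (Fin n) (Fin n) ℝ) (hMsymm : M.IsSymm) (hMpd : M.PosDef)
    (k : (Fin n → ℝ) → (Fin n → ℝ)) (k' : (Fin n → ℝ) → Matrix (Fin n) (Fin n) ℝ)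
    (hk : ∀ x, HasFDerivAt k (LinearMap.toContinuousLinearMap (k' x).mulVecLin) x)
    (hk' : Continuous k')
    (C : Matrix (Fin p) (Fin n) ℝ) {α : ℝ} (hα : 0 < α)
    (r : ℝ → Fin n → ℝ) (hr : ContinuousOn r (Icc ti te))
    (yd : ℝ → Fin p → ℝ) (hyd : ContinuousOn yd (Icc ti te))
    (w w' w'' : ℝ → Fin n → ℝ)
    (hw : ∀ t ∈ Icc ti te, HasDerivWithinAt w (w' t) (Icc ti te) t)
    (hw' : ∀ t ∈ Icc ti te, HasDerivWithinAt w' (w'' t) (Icc ti te) t)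
    (hw'' : ContinuousOn w'' (Icc ti te))
    (hvar : ∀ δr δr' δr'' : ℝ → Fin n → ℝ,
      (∀ t ∈ Icc ti te, HasDerivWithinAt δr (δr' t) (Icc ti te) t) →
      (∀ t ∈ Icc ti te, HasDerivWithinAt δr' (δr'' t) (Icc ti te) t) →
      ContinuousOn δr'' (Icc ti te) →
      δr ti = 0 → δr te = 0 → δr' ti = 0 → δr' te = 0 →
      (∫ t in ti..te,
        (δr t ⬝ᵥ (α • (Cᵀ *ᵥ (C *ᵥ r t - yd t)) - (k' (r t))ᵀ *ᵥ w t)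
          - δr'' t ⬝ᵥ (M *ᵥ w t))) = 0) :
    ∀ t ∈ Icc ti te,
      M *ᵥ w'' t = -((k' (r t))ᵀ *ᵥ w t) + α • (Cᵀ *ᵥ (C *ᵥ r t - yd t)) := by
  have hwc : ContinuousOn w (Icc ti te) := fun t ht => (hw t ht).continuousWithinAt
  have hw'c : ContinuousOn w' (Icc ti te) := fun t ht => (hw' t ht).continuousWithinAt
  set X : ℝ → Fin n → ℝ := fun t => α • (Cᵀ *ᵥ (C *ᵥ r t - yd t)) with hXdef
  set Y : ℝ → Fin n → ℝ := fun t => (k' (r t))ᵀ *ᵥ w t with hYdef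
  have hXc : ContinuousOn X (Icc ti te) := by
    rw [hXdef]
    refine ContinuousOn.const_smul (g := fun t => Cᵀ *ᵥ (C *ᵥ r t - yd t)) ?_ α
    exact continuousOn_mulVec continuousOn_const
      ((continuousOn_mulVec continuousOn_const hr).sub hyd)
  have hYc : ContinuousOn Y (Icc ti te) := by
    apply continuousOn_mulVec _ hwc
    apply continuousOn_pi.2; intro j; apply continuousOn_pi.2; intro l
    exact ((continuous_apply j).comp (continuous_apply l)).comp_continuousOn
      (hk'.comp_continuousOn hr)
  set F : ℝ → Fin n → ℝ := fun t => X t - Y t - M *ᵥ w'' t with hFdef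
  have hFc : ContinuousOn F (Icc ti te) :=
    (hXc.sub hYc).sub (continuousOn_mulVec continuousOn_const hw'')
  have hvarF : ∀ δr δr' δr'' : ℝ → Fin n → ℝ,
      (∀ t ∈ Icc ti te, HasDerivWithinAt δr (δr' t) (Icc ti te) t) →
      (∀ t ∈ Icc ti te, HasDerivWithinAt δr' (δr'' t) (Icc ti te) t) →
      ContinuousOn δr'' (Icc ti te) →
      δr ti = 0 → δr te = 0 → δr' ti = 0 → δr' te = 0 →
      (∫ t in ti..te, δr t ⬝ᵥ F t) = 0 := by
    intro δr δr' δr'' hd1 hd2 hd3 hbi hbe hbi' hbe'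
    have hδrc : ContinuousOn δr (Icc ti te) := fun t ht => (hd1 t ht).continuousWithinAt
    have hδr'c : ContinuousOn δr' (Icc ti te) := fun t ht => (hd2 t ht).continuousWithinAt
    -- integration by parts: ∫ (δr'' ⬝ Mw - δr ⬝ Mw'') = 0
    set H : ℝ → ℝ := fun t => δr' t ⬝ᵥ (M *ᵥ w t) - δr t ⬝ᵥ (M *ᵥ w' t) with hHdef
    set G2 : ℝ → ℝ := fun t => δr'' t ⬝ᵥ (M *ᵥ w t) - δr t ⬝ᵥ (M *ᵥ w'' t) with hG2def
    have hHderiv : ∀ t ∈ Icc ti te, HasDerivWithinAt H (G2 t) (Icc ti te) t := by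
      intro t ht
      have d1 : HasDerivWithinAt (fun u => δr' u ⬝ᵥ (M *ᵥ w u))
          (δr'' t ⬝ᵥ (M *ᵥ w t) + δr' t ⬝ᵥ (M *ᵥ w' t)) (Icc ti te) t :=
        hasDerivWithinAt_dot (hd2 t ht) (hasDerivWithinAt_mulVec M (hw t ht))
      have d2 : HasDerivWithinAt (fun u => δr u ⬝ᵥ (M *ᵥ w' u))
          (δr' t ⬝ᵥ (M *ᵥ w' t) + δr t ⬝ᵥ (M *ᵥ w'' t)) (Icc ti te) t :=
        hasDerivWithinAt_dot (hd1 t ht) (hasDerivWithinAt_mulVec M (hw' t ht))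
      have hsub := d1.sub d2
      convert hsub using 1
      · rfl
      · rfl
      show δr'' t ⬝ᵥ (M *ᵥ w t) - δr t ⬝ᵥ (M *ᵥ w'' t) = _
      ring
      rfl
    have hHc : ContinuousOn H (Icc ti te) := fun t ht => (hHderiv t ht).continuousWithinAt
    have hG2c : ContinuousOn G2 (Icc ti te) :=
      (continuousOn_dot hd3 (continuousOn_mulVec continuousOn_const hwc)).sub
        (continuousOn_dot hδrc (continuousOn_mulVec continuousOn_const hw''))
    have hG2int : IntervalIntegrable G2 MeasureTheory.volume ti te :=
      (by rw [uIcc_of_le hti.le]; exact hG2c :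
        ContinuousOn G2 (uIcc ti te)).intervalIntegrable
    have hibp : (∫ t in ti..te, G2 t) = 0 := by
      rw [intervalIntegral.integral_eq_sub_of_hasDeriv_right_of_le hti.le hHc
        (fun x hx => (hHderiv x (Ioo_subset_Icc_self hx)).mono_of_mem_nhdsWithin
          (Icc_mem_nhdsGT_of_mem ⟨hx.1.le, hx.2⟩)) hG2int]
      simp [hHdef, hbi, hbe, hbi', hbe']
    have hI1 := hvar δr δr' δr'' hd1 hd2 hd3 hbi hbe hbi' hbe'
    have hG1c : ContinuousOn (fun t => δr t ⬝ᵥ (X t - Y t) - δr'' t ⬝ᵥ (M *ᵥ w t)) (Icc ti te) :=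
      (continuousOn_dot hδrc (hXc.sub hYc)).sub
        (continuousOn_dot hd3 (continuousOn_mulVec continuousOn_const hwc))
    have hG1int : IntervalIntegrable (fun t => δr t ⬝ᵥ (X t - Y t) - δr'' t ⬝ᵥ (M *ᵥ w t))
        MeasureTheory.volume ti te :=
      (by rw [uIcc_of_le hti.le]; exact hG1c :
        ContinuousOn _ (uIcc ti te)).intervalIntegrable
    have key : ∀ t, δr t ⬝ᵥ F t =
        (δr t ⬝ᵥ (X t - Y t) - δr'' t ⬝ᵥ (M *ᵥ w t)) + G2 t := by
      intro t
      simp only [hFdef, hG2def, dotProduct_sub]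
      ring
    rw [intervalIntegral.integral_congr (fun t _ => key t),
      intervalIntegral.integral_add hG1int hG2int, hibp, hI1, add_zero]
  have hF0 := fundamental_lemma hti F hFc hvarF
  intro t ht
  have h0 := hF0 t ht
  have h1 : X t - Y t = M *ᵥ w'' t := by
    have : X t - Y t - M *ᵥ w'' t = 0 := h0
    rwa [sub_eq_zero] at this
  rw [neg_add_eq_sub]
  exact h1.symm
end

section
/- Let L > 0, t_i < t_e, d ∈ {1,2,3}, let μ : [0,L] → ℝ be continuous with μ(s) > 0 (the mass density per unit length ρ(s)A(s)), and let b : [0,L] × [t_i,t_e] → ℝᵈ and u : [t_i,t_e] → ℝᵈ be continuous. Let r : [0,L] × [t_i,t_e] → ℝᵈ be twice continuously differentiable, and let n : [0,L] × [t_i,t_e] → ℝᵈ be continuously differentiable in s with n and ∂ₛn continuous. Assume: (i) μ(s) ∂ₜ²r(s,t) = ∂ₛn(s,t) + b(s,t) on [0,L] × [t_i,t_e]; (ii) n(0,t) = -u(t) and n(L,t) = 0 for all t; (iii) ∂ₜr(s,t_i) = v_i(s) and ∂ₜr(s,t_e) = v_e(s) for all s. Then for every continuously differentiable δw : [0,L]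 × [t_i,t_e] → ℝᵈ the space-time variational identity holds: ∫₀ᴸ∫_{t_i}^{t_e} μ ⟨∂ₜδw, ∂ₜr⟩ dt ds - ∫₀ᴸ∫_{t_i}^{t_e} ⟨∂ₛδw, n⟩ dt ds + ∫₀ᴸ∫_{t_i}^{t_e} ⟨δw, b⟩ dt ds + ∫₀ᴸ μ(s) ⟨δw(s,t_i), v_i(s)⟩ ds - ∫₀ᴸ μ(s) ⟨δw(s,t_e), v_e(s)⟩ ds + ∫_{t_i}^{t_e} ⟨δw(0,t), u(t)⟩ dt = 0. -/
open Set MeasureTheory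
open scoped InnerProductSpace

lemma my_ibp {E : Type*} [NormedAddCommGroup E] [InnerProductSpace ℝ E]
    {a b : ℝ} (hab : a ≤ b) {f g f' g' : ℝ → E}
    (hf : ∀ x ∈ Icc a b, HasDerivWithinAt f (f' x) (Icc a b) x)
    (hg : ∀ x ∈ Icc a b, HasDerivWithinAt g (g' x) (Icc a b) x)
    (hf' : ContinuousOn f' (Icc a b)) (hg' : ContinuousOn g' (Icc a b)) :
    ∫ x in a..b, (⟪f x, g' x⟫_ℝ + ⟪f' x, g x⟫_ℝ) = ⟪f b, g b⟫_ℝ - ⟪f a, g a⟫_ℝ := by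
  have hfc : ContinuousOn f (Icc a b) := fun x hx => (hf x hx).continuousWithinAt
  have hgc : ContinuousOn g (Icc a b) := fun x hx => (hg x hx).continuousWithinAt
  apply intervalIntegral.integral_eq_sub_of_hasDeriv_right_of_le hab (hfc.inner hgc)
  · intro x hx
    have hx' : x ∈ Icc a b := Ioo_subset_Icc_self hx
    exact (((hf x hx').hasDerivAt (Icc_mem_nhds hx.1 hx.2)).inner ℝ
      ((hg x hx').hasDerivAt (Icc_mem_nhds hx.1 hx.2))).hasDerivWithinAt
  · apply ContinuousOn.intervalIntegrable
    rw [uIcc_of_le hab]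
    exact (hfc.inner hg').add (hf'.inner hgc)

lemma my_param_integrable {a b c d : ℝ} (hab : a ≤ b) (hcd : c ≤ d) {F : ℝ → ℝ → ℝ}
    (hF : ContinuousOn (fun q : ℝ × ℝ => F q.1 q.2) (Icc a b ×ˢ Icc c d)) :
    IntervalIntegrable (fun s => ∫ t in c..d, F s t) volume a b := by
  rw [intervalIntegrable_iff_integrableOn_Icc_of_le hab]
  have hint : IntegrableOn (fun q : ℝ × ℝ => F q.1 q.2) (Icc a b ×ˢ Icc c d) :=
    hF.integrableOn_compact (isCompact_Icc.prod isCompact_Icc)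
  rw [IntegrableOn, Measure.volume_eq_prod, ← Measure.prod_restrict] at hint
  have h2 := hint.integral_prod_left
  have heq : (fun s => ∫ t in c..d, F s t) = fun s => ∫ t in Icc c d, F s t := by
    funext s
    rw [intervalIntegral.integral_of_le hcd, ← integral_Icc_eq_integral_Ioc]
  rw [heq]
  exact h2

lemma my_double_eq_set {a b c d : ℝ} (hab : a ≤ b) (hcd : c ≤ d) {F : ℝ → ℝ → ℝ}
    (hF : ContinuousOn (fun q : ℝ × ℝ => F q.1 q.2) (Icc a b ×ˢ Icc c d)) :
    (∫ s in a..b, ∫ t in c..d, F s t) = ∫ q in Icc a b ×ˢ Icc c d, F q.1 q.2 := by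
  have hint : IntegrableOn (fun q : ℝ × ℝ => F q.1 q.2) (Icc a b ×ˢ Icc c d) :=
    hF.integrableOn_compact (isCompact_Icc.prod isCompact_Icc)
  rw [show (volume : MeasureTheory.Measure (ℝ × ℝ)) = (volume : Measure ℝ).prod volume from
    Measure.volume_eq_prod ℝ ℝ] at hint ⊢
  rw [setIntegral_prod _ hint]
  have heq : (fun s => ∫ t in c..d, F s t) = fun s => ∫ t in Icc c d, F s t := by
    funext s
    rw [intervalIntegral.integral_of_le hcd, ← integral_Icc_eq_integral_Ioc]
  rw [intervalIntegral.integral_of_le hab, ← integral_Icc_eq_integral_Ioc, heq]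

lemma my_double_eq_set_swap {a b c d : ℝ} (hab : a ≤ b) (hcd : c ≤ d) {F : ℝ → ℝ → ℝ}
    (hF : ContinuousOn (fun q : ℝ × ℝ => F q.1 q.2) (Icc a b ×ˢ Icc c d)) :
    (∫ t in c..d, ∫ s in a..b, F s t) = ∫ q in Icc a b ×ˢ Icc c d, F q.1 q.2 := by
  have hG : ContinuousOn (fun q : ℝ × ℝ => F q.2 q.1) (Icc c d ×ˢ Icc a b) :=
    hF.comp continuous_swap.continuousOn (fun q hq => ⟨hq.2, hq.1⟩)
  have hint : IntegrableOn (fun q : ℝ × ℝ => F q.2 q.1) (Icc c d ×ˢ Icc a b) :=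
    hG.integrableOn_compact (isCompact_Icc.prod isCompact_Icc)
  rw [IntegrableOn, Measure.volume_eq_prod, ← Measure.prod_restrict] at hint
  rw [← my_double_eq_set hab hcd hF]
  have heq1 : (fun t => ∫ s in a..b, F s t) = fun t => ∫ s in Icc a b, F s t := by
    funext t
    rw [intervalIntegral.integral_of_le hab, ← integral_Icc_eq_integral_Ioc]
  have heq2 : (fun s => ∫ t in c..d, F s t) = fun s => ∫ t in Icc c d, F s t := by
    funext s
    rw [intervalIntegral.integral_of_le hcd, ← integral_Icc_eq_integral_Ioc]
  rw [intervalIntegral.integral_of_le hcd, ← integral_Icc_eq_integral_Ioc, heq1,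
    intervalIntegral.integral_of_le hab, ← integral_Icc_eq_integral_Ioc, heq2]
  exact integral_integral_swap hint

set_option maxHeartbeats 2000000 in
/-- A sufficiently regular solution of the string momentum balance with the force
boundary conditions and the prescribed initial and final velocities satisfies the second
space-time variational identity of the optimality system, in which only first
derivatives of the position field appear. -/
theorem string_spacetime_variational_identity
    {d : ℕ} (hd : d = 1 ∨ d = 2 ∨ d = 3)
    {L ti te : ℝ} (hL : 0 < L) (ht : ti < te)
    (μ : ℝ → ℝ) (hμc : ContinuousOn μ (Icc 0 L))
    (hμpos : ∀ s ∈ Icc (0:ℝ) L, 0 < μ s)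
    (b : ℝ → ℝ → EuclideanSpace ℝ (Fin d))
    (hb : ContinuousOn (fun q : ℝ × ℝ => b q.1 q.2) (Icc 0 L ×ˢ Icc ti te))
    (u : ℝ → EuclideanSpace ℝ (Fin d)) (hu : ContinuousOn u (Icc ti te))
    (r rt rtt : ℝ → ℝ → EuclideanSpace ℝ (Fin d))
    (hrt : ∀ s ∈ Icc (0:ℝ) L, ∀ t ∈ Icc ti te,
      HasDerivWithinAt (r s) (rt s t) (Icc ti te) t)
    (hrtt : ∀ s ∈ Icc (0:ℝ) L, ∀ t ∈ Icc ti te,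
      HasDerivWithinAt (rt s) (rtt s t) (Icc ti te) t)
    (hrtc : ContinuousOn (fun q : ℝ × ℝ => rt q.1 q.2) (Icc 0 L ×ˢ Icc ti te))
    (hrttc : ContinuousOn (fun q : ℝ × ℝ => rtt q.1 q.2) (Icc 0 L ×ˢ Icc ti te))
    (nf ns : ℝ → ℝ → EuclideanSpace ℝ (Fin d))
    (hns : ∀ s ∈ Icc (0:ℝ) L, ∀ t ∈ Icc ti te,
      HasDerivWithinAt (fun σ => nf σ t) (ns s t) (Icc 0 L) s)
    (hnc : ContinuousOn (fun q : ℝ × ℝ => nf q.1 q.2) (Icc 0 L ×ˢ Icc ti te))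
    (hnsc : ContinuousOn (fun q : ℝ × ℝ => ns q.1 q.2) (Icc 0 L ×ˢ Icc ti te))
    (vi ve : ℝ → EuclideanSpace ℝ (Fin d))
    (hbal : ∀ s ∈ Icc (0:ℝ) L, ∀ t ∈ Icc ti te, μ s • rtt s t = ns s t + b s t)
    (hbc0 : ∀ t ∈ Icc ti te, nf 0 t = -u t)
    (hbcL : ∀ t ∈ Icc ti te, nf L t = 0)
    (hvi : ∀ s ∈ Icc (0:ℝ) L, rt s ti = vi s)
    (hve : ∀ s ∈ Icc (0:ℝ) L, rt s te = ve s) :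
    ∀ δw δws δwt : ℝ → ℝ → EuclideanSpace ℝ (Fin d),
      (∀ s ∈ Icc (0:ℝ) L, ∀ t ∈ Icc ti te,
        HasDerivWithinAt (fun σ => δw σ t) (δws s t) (Icc 0 L) s) →
      (∀ s ∈ Icc (0:ℝ) L, ∀ t ∈ Icc ti te,
        HasDerivWithinAt (δw s) (δwt s t) (Icc ti te) t) →
      ContinuousOn (fun q : ℝ × ℝ => δw q.1 q.2) (Icc 0 L ×ˢ Icc ti te) →
      ContinuousOn (fun q : ℝ × ℝ => δws q.1 q.2) (Icc 0 L ×ˢ Icc ti te) →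
      ContinuousOn (fun q : ℝ × ℝ => δwt q.1 q.2) (Icc 0 L ×ˢ Icc ti te) →
      (∫ s in (0:ℝ)..L, ∫ t in ti..te, μ s * ⟪δwt s t, rt s t⟫_ℝ)
        - (∫ s in (0:ℝ)..L, ∫ t in ti..te, ⟪δws s t, nf s t⟫_ℝ)
        + (∫ s in (0:ℝ)..L, ∫ t in ti..te, ⟪δw s t, b s t⟫_ℝ)
        + (∫ s in (0:ℝ)..L, μ s * ⟪δw s ti, vi s⟫_ℝ)
        - (∫ s in (0:ℝ)..L, μ s * ⟪δw s te, ve s⟫_ℝ)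
        + (∫ t in ti..te, ⟪δw 0 t, u t⟫_ℝ) = 0 := by
  intro δw δws δwt hδws hδwt hδwc hδwsc hδwtc
  have htle : ti ≤ te := ht.le
  have hLle : (0:ℝ) ≤ L := hL.le
  -- slice continuity in t (fixed s)
  have sliceT : ∀ {F : ℝ → ℝ → EuclideanSpace ℝ (Fin d)},
      ContinuousOn (fun q : ℝ × ℝ => F q.1 q.2) (Icc 0 L ×ˢ Icc ti te) →
      ∀ s ∈ Icc (0:ℝ) L, ContinuousOn (F s) (Icc ti te) := by
    intro F hF s hs
    have h := hF.comp ((continuous_const.prodMk continuous_id).continuousOn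
      (s := Icc ti te) (f := fun t : ℝ => ((s, t) : ℝ × ℝ)))
      (fun t ht' => ⟨hs, ht'⟩)
    exact h
  -- slice continuity in s (fixed t)
  have sliceS : ∀ {F : ℝ → ℝ → EuclideanSpace ℝ (Fin d)},
      ContinuousOn (fun q : ℝ × ℝ => F q.1 q.2) (Icc 0 L ×ˢ Icc ti te) →
      ∀ t ∈ Icc ti te, ContinuousOn (fun σ => F σ t) (Icc 0 L) := by
    intro F hF t ht'
    have h := hF.comp ((continuous_id.prodMk continuous_const).continuousOn
      (s := Icc 0 L) (f := fun σ : ℝ => ((σ, t) : ℝ × ℝ)))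
      (fun s hs => ⟨hs, ht'⟩)
    exact h
  have hvec : ContinuousOn ve (Icc 0 L) :=
    (sliceS hrtc te (right_mem_Icc.2 htle)).congr (fun s hs => (hve s hs).symm)
  have hvic : ContinuousOn vi (Icc 0 L) :=
    (sliceS hrtc ti (left_mem_Icc.2 htle)).congr (fun s hs => (hvi s hs).symm)
  -- Step 1: integration by parts in time, for each fixed s
  have key1 : ∀ s ∈ Icc (0:ℝ) L,
      (∫ t in ti..te, μ s * ⟪δwt s t, rt s t⟫_ℝ)
        = μ s * ⟪δw s te, ve s⟫_ℝ - μ s * ⟪δw s ti, vi s⟫_ℝ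
          - ∫ t in ti..te, μ s * ⟪δw s t, rtt s t⟫_ℝ := by
    intro s hs
    have hibp := my_ibp htle (fun t ht' => hδwt s hs t ht') (fun t ht' => hrtt s hs t ht')
      (sliceT hδwtc s hs) (sliceT hrttc s hs)
    have hA : IntervalIntegrable (fun t => ⟪δw s t, rtt s t⟫_ℝ) volume ti te := by
      apply ContinuousOn.intervalIntegrable
      rw [uIcc_of_le htle]
      exact (sliceT hδwc s hs).inner (sliceT hrttc s hs)
    have hB : IntervalIntegrable (fun t => ⟪δwt s t, rt s t⟫_ℝ) volume ti te := by
      apply ContinuousOn.intervalIntegrable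
      rw [uIcc_of_le htle]
      exact (sliceT hδwtc s hs).inner (sliceT hrtc s hs)
    have hsplit := intervalIntegral.integral_add hA hB
    rw [hsplit] at hibp
    rw [intervalIntegral.integral_const_mul, intervalIntegral.integral_const_mul,
      ← hve s hs, ← hvi s hs]
    have : (∫ t in ti..te, ⟪δwt s t, rt s t⟫_ℝ)
        = ⟪δw s te, rt s te⟫_ℝ - ⟪δw s ti, rt s ti⟫_ℝ
          - ∫ t in ti..te, ⟪δw s t, rtt s t⟫_ℝ := by linarith
    rw [this]; ring
  -- Step 2: integration by parts in space, for each fixed t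
  have key2 : ∀ t ∈ Icc ti te,
      (∫ s in (0:ℝ)..L, ⟪δws s t, nf s t⟫_ℝ)
        = ⟪δw 0 t, u t⟫_ℝ - ∫ s in (0:ℝ)..L, ⟪δw s t, ns s t⟫_ℝ := by
    intro t ht'
    have hibp := my_ibp hLle (fun s hs => hδws s hs t ht') (fun s hs => hns s hs t ht')
      (sliceS hδwsc t ht') (sliceS hnsc t ht')
    have hA : IntervalIntegrable (fun s => ⟪δw s t, ns s t⟫_ℝ) volume 0 L := by
      apply ContinuousOn.intervalIntegrable
      rw [uIcc_of_le hLle]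
      exact (sliceS hδwc t ht').inner (sliceS hnsc t ht')
    have hB : IntervalIntegrable (fun s => ⟪δws s t, nf s t⟫_ℝ) volume 0 L := by
      apply ContinuousOn.intervalIntegrable
      rw [uIcc_of_le hLle]
      exact (sliceS hδwsc t ht').inner (sliceS hnc t ht')
    have hsplit := intervalIntegral.integral_add hA hB
    rw [hsplit, hbcL t ht', hbc0 t ht'] at hibp
    simp only [inner_zero_right, inner_neg_right] at hibp
    linarith
  -- joint continuity of various integrands
  have hμfst : ContinuousOn (fun q : ℝ × ℝ => μ q.1) (Icc 0 L ×ˢ Icc ti te) :=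
    hμc.comp continuous_fst.continuousOn (fun q hq => hq.1)
  have contJt : ContinuousOn (fun q : ℝ × ℝ => μ q.1 * ⟪δw q.1 q.2, rtt q.1 q.2⟫_ℝ)
      (Icc 0 L ×ˢ Icc ti te) := hμfst.mul (hδwc.inner hrttc)
  have contNs : ContinuousOn (fun q : ℝ × ℝ => ⟪δw q.1 q.2, ns q.1 q.2⟫_ℝ)
      (Icc 0 L ×ˢ Icc ti te) := hδwc.inner hnsc
  have contB : ContinuousOn (fun q : ℝ × ℝ => ⟪δw q.1 q.2, b q.1 q.2⟫_ℝ)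
      (Icc 0 L ×ˢ Icc ti te) := hδwc.inner hb
  have contWsNf : ContinuousOn (fun q : ℝ × ℝ => ⟪δws q.1 q.2, nf q.1 q.2⟫_ℝ)
      (Icc 0 L ×ˢ Icc ti te) := hδwsc.inner hnc
  -- integrability of the outer integrands
  have i5 : IntervalIntegrable (fun s => μ s * ⟪δw s te, ve s⟫_ℝ) volume 0 L := by
    apply ContinuousOn.intervalIntegrable
    rw [uIcc_of_le hLle]
    exact hμc.mul ((sliceS hδwc te (right_mem_Icc.2 htle)).inner hvec)
  have i4 : IntervalIntegrable (fun s => μ s * ⟪δw s ti, vi s⟫_ℝ) volume 0 L := by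
    apply ContinuousOn.intervalIntegrable
    rw [uIcc_of_le hLle]
    exact hμc.mul ((sliceS hδwc ti (left_mem_Icc.2 htle)).inner hvic)
  have iJt : IntervalIntegrable
      (fun s => ∫ t in ti..te, μ s * ⟪δw s t, rtt s t⟫_ℝ) volume 0 L :=
    my_param_integrable hLle htle contJt
  have iJs : IntervalIntegrable
      (fun t => ∫ s in (0:ℝ)..L, ⟪δw s t, ns s t⟫_ℝ) volume ti te := by
    apply my_param_integrable htle hLle
      (F := fun t s => ⟪δw s t, ns s t⟫_ℝ)
    exact contNs.comp continuous_swap.continuousOn (fun q hq => ⟨hq.2, hq.1⟩)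
  have i6 : IntervalIntegrable (fun t => ⟪δw 0 t, u t⟫_ℝ) volume ti te := by
    apply ContinuousOn.intervalIntegrable
    rw [uIcc_of_le htle]
    exact (sliceT hδwc 0 (left_mem_Icc.2 hLle)).inner hu
  -- transform term 1
  have e1 : (∫ s in (0:ℝ)..L, ∫ t in ti..te, μ s * ⟪δwt s t, rt s t⟫_ℝ)
      = (∫ s in (0:ℝ)..L, μ s * ⟪δw s te, ve s⟫_ℝ)
        - (∫ s in (0:ℝ)..L, μ s * ⟪δw s ti, vi s⟫_ℝ)
        - ∫ s in (0:ℝ)..L, ∫ t in ti..te, μ s * ⟪δw s t, rtt s t⟫_ℝ := by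
    rw [intervalIntegral.integral_congr
      (fun s hs => key1 s (by rwa [uIcc_of_le hLle] at hs)),
      intervalIntegral.integral_sub (i5.sub i4) iJt,
      intervalIntegral.integral_sub i5 i4]
  -- transform term 2 : swap the order of integration, then integrate by parts in s
  have e2 : (∫ s in (0:ℝ)..L, ∫ t in ti..te, ⟪δws s t, nf s t⟫_ℝ)
      = (∫ t in ti..te, ⟪δw 0 t, u t⟫_ℝ)
        - ∫ t in ti..te, ∫ s in (0:ℝ)..L, ⟪δw s t, ns s t⟫_ℝ := by
    rw [my_double_eq_set (F := fun s t => ⟪δws s t, nf s t⟫_ℝ) hLle htle contWsNf,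
      ← my_double_eq_set_swap (F := fun s t => ⟪δws s t, nf s t⟫_ℝ) hLle htle contWsNf,
      intervalIntegral.integral_congr
        (fun t ht' => key2 t (by rwa [uIcc_of_le htle] at ht')),
      intervalIntegral.integral_sub i6 iJs]
  -- the balance law kills the remaining double integrals
  have hzero : (∫ s in (0:ℝ)..L, ∫ t in ti..te, μ s * ⟪δw s t, rtt s t⟫_ℝ)
      = (∫ t in ti..te, ∫ s in (0:ℝ)..L, ⟪δw s t, ns s t⟫_ℝ)
        + ∫ s in (0:ℝ)..L, ∫ t in ti..te, ⟪δw s t, b s t⟫_ℝ := by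
    rw [my_double_eq_set (F := fun s t => μ s * ⟪δw s t, rtt s t⟫_ℝ) hLle htle contJt,
      my_double_eq_set_swap (F := fun s t => ⟪δw s t, ns s t⟫_ℝ) hLle htle contNs,
      my_double_eq_set (F := fun s t => ⟪δw s t, b s t⟫_ℝ) hLle htle contB]
    have hIns : IntegrableOn (fun q : ℝ × ℝ => ⟪δw q.1 q.2, ns q.1 q.2⟫_ℝ)
        (Icc 0 L ×ˢ Icc ti te) := contNs.integrableOn_compact (isCompact_Icc.prod isCompact_Icc)
    have hIb : IntegrableOn (fun q : ℝ × ℝ => ⟪δw q.1 q.2, b q.1 q.2⟫_ℝ)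
        (Icc 0 L ×ˢ Icc ti te) := contB.integrableOn_compact (isCompact_Icc.prod isCompact_Icc)
    rw [← integral_add hIns hIb]
    apply setIntegral_congr_fun (measurableSet_Icc.prod measurableSet_Icc)
    intro q hq
    have hb' := hbal q.1 hq.1 q.2 hq.2
    calc μ q.1 * ⟪δw q.1 q.2, rtt q.1 q.2⟫_ℝ
        = ⟪δw q.1 q.2, μ q.1 • rtt q.1 q.2⟫_ℝ := (real_inner_smul_right _ _ _).symm
      _ = ⟪δw q.1 q.2, ns q.1 q.2 + b q.1 q.2⟫_ℝ := by rw [hb']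
      _ = ⟪δw q.1 q.2, ns q.1 q.2⟫_ℝ + ⟪δw q.1 q.2, b q.1 q.2⟫_ℝ := inner_add_right _ _ _
  rw [e1, e2]
  linarith [hzero]
end

section
/- Let r, w : [t_i,t_e] → ℝⁿ be twice continuously differentiable and u : [t_i,t_e] → ℝᵐ continuous, and suppose the optimality conditions hold on [t_i,t_e]: u(t) = -Gᵀ w(t), M r̈(t) = -k(r(t)) + b(t) + G u(t), and M ẅ(t) = -(Dk(r(t)))ᵀ w(t) + α Cᵀ(C r(t) - y_d(t)). Then for every twice continuously differentiable δr : [t_i,t_e] → ℝⁿ with δr(t_i) = δr(t_e) = 0 and δṙ(t_i) = δṙ(t_e) = 0, and all continuous δu : [t_i,t_e] → ℝᵐ, δw : [t_i,t_e] → ℝⁿ, one has ∫_{t_i}^{t_e} [ ⟨δu(t), u(t) + Gᵀ w(t)⟩ + ⟨δw(t), -M r̈(t) - k(r(t)) + b(t) + G u(t)⟩ + ⟨δr(t), α Cᵀ(C r(t) - y_d(t)) - (Dk(r(t)))ᵀ w(t)⟩ - ⟨δr̈(t), M w(t)⟩ ] dt = 0; i.e., the first variation of the Lagrange functional J vanishes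 at (r, u, w) for all admissible variations. -/
open Set Matrix

lemma dot_hasDerivWithinAt {n : ℕ} {f g : ℝ → Fin n → ℝ} {f' g' : Fin n → ℝ}
    {s : Set ℝ} {t : ℝ}
    (hf : HasDerivWithinAt f f' s t) (hg : HasDerivWithinAt g g' s t) :
    HasDerivWithinAt (fun t => f t ⬝ᵥ g t) (f' ⬝ᵥ g t + f t ⬝ᵥ g') s t := by
  simp only [dotProduct, ← Finset.sum_add_distrib]
  exact HasDerivWithinAt.fun_sum fun i _ =>
    (hasDerivWithinAt_pi.1 hf i).mul (hasDerivWithinAt_pi.1 hg i)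

lemma mulVec_hasDerivWithinAt {n : ℕ} {M : Matrix (Fin n) (Fin n) ℝ}
    {f : ℝ → Fin n → ℝ} {f' : Fin n → ℝ} {s : Set ℝ} {t : ℝ}
    (hf : HasDerivWithinAt f f' s t) :
    HasDerivWithinAt (fun t => M *ᵥ f t) (M *ᵥ f') s t := by
  rw [hasDerivWithinAt_pi]
  intro i
  simp only [mulVec, dotProduct]
  exact HasDerivWithinAt.fun_sum fun j _ => (hasDerivWithinAt_pi.1 hf j).const_mul _

lemma dot_continuousOn {n : ℕ} {f g : ℝ → Fin n → ℝ} {s : Set ℝ}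
    (hf : ContinuousOn f s) (hg : ContinuousOn g s) :
    ContinuousOn (fun t => f t ⬝ᵥ g t) s := by
  simp only [dotProduct]
  exact continuousOn_finset_sum _ fun i _ =>
    (((continuous_apply i).comp_continuousOn hf)).mul
      ((continuous_apply i).comp_continuousOn hg)

lemma mulVec_continuousOn {n : ℕ} {M : Matrix (Fin n) (Fin n) ℝ}
    {f : ℝ → Fin n → ℝ} {s : Set ℝ} (hf : ContinuousOn f s) :
    ContinuousOn (fun t => M *ᵥ f t) s := by
  refine continuousOn_pi.2 fun i => ?_
  simp only [mulVec, dotProduct]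
  exact continuousOn_finset_sum _ fun j _ =>
    continuousOn_const.mul ((continuous_apply j).comp_continuousOn hf)


/-- If `(r, u, w)` satisfies the three optimality conditions `u = -Gᵀw`,
`M r̈ = -k(r) + b + G u`, and `M ẅ = -(Dk(r))ᵀ w + α Cᵀ(C r - y_d)` on `[t_i, t_e]`,
then the first variation of the Lagrange functional `J` vanishes at `(r, u, w)` for all
admissible variations `(δr, δu, δw)`. -/
theorem optimality_conditions_imply_stationarity
    {n m p : ℕ} {ti te : ℝ} (hti : ti < te)
    (M : Matrix (Fin n) (Fin n) ℝ) (hMsymm : M.IsSymm) (hMpd : M.PosDef)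
    (k : (Fin n → ℝ) → (Fin n → ℝ)) (k' : (Fin n → ℝ) → Matrix (Fin n) (Fin n) ℝ)
    (hk : ∀ x, HasFDerivAt k (LinearMap.toContinuousLinearMap (k' x).mulVecLin) x)
    (hk' : Continuous k')
    (G : Matrix (Fin n) (Fin m) ℝ) (C : Matrix (Fin p) (Fin n) ℝ)
    {α : ℝ} (hα : 0 < α)
    (b : ℝ → Fin n → ℝ) (hb : ContinuousOn b (Icc ti te))
    (yd : ℝ → Fin p → ℝ) (hyd : ContinuousOn yd (Icc ti te))
    (r r' r'' : ℝ → Fin n → ℝ)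
    (hr : ∀ t ∈ Icc ti te, HasDerivWithinAt r (r' t) (Icc ti te) t)
    (hr' : ∀ t ∈ Icc ti te, HasDerivWithinAt r' (r'' t) (Icc ti te) t)
    (hr'' : ContinuousOn r'' (Icc ti te))
    (w w' w'' : ℝ → Fin n → ℝ)
    (hw : ∀ t ∈ Icc ti te, HasDerivWithinAt w (w' t) (Icc ti te) t)
    (hw' : ∀ t ∈ Icc ti te, HasDerivWithinAt w' (w'' t) (Icc ti te) t)
    (hw'' : ContinuousOn w'' (Icc ti te))
    (u : ℝ → Fin m → ℝ) (hu : ContinuousOn u (Icc ti te))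
    (hopt1 : ∀ t ∈ Icc ti te, u t = -(Gᵀ *ᵥ w t))
    (hopt2 : ∀ t ∈ Icc ti te, M *ᵥ r'' t = -(k (r t)) + b t + G *ᵥ u t)
    (hopt3 : ∀ t ∈ Icc ti te,
      M *ᵥ w'' t = -((k' (r t))ᵀ *ᵥ w t) + α • (Cᵀ *ᵥ (C *ᵥ r t - yd t))) :
    ∀ (δr δr' δr'' : ℝ → Fin n → ℝ),
      (∀ t ∈ Icc ti te, HasDerivWithinAt δr (δr' t) (Icc ti te) t) →
      (∀ t ∈ Icc ti te, HasDerivWithinAt δr' (δr'' t) (Icc ti te) t) →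
      ContinuousOn δr'' (Icc ti te) →
      δr ti = 0 → δr te = 0 → δr' ti = 0 → δr' te = 0 →
      ∀ δu : ℝ → Fin m → ℝ, Continuous δu →
      ∀ δw : ℝ → Fin n → ℝ, Continuous δw →
      (∫ t in ti..te,
        (δu t ⬝ᵥ (u t + Gᵀ *ᵥ w t)
          + δw t ⬝ᵥ (-(M *ᵥ r'' t) - k (r t) + b t + G *ᵥ u t)
          + δr t ⬝ᵥ (α • (Cᵀ *ᵥ (C *ᵥ r t - yd t)) - (k' (r t))ᵀ *ᵥ w t)
          - δr'' t ⬝ᵥ (M *ᵥ w t))) = 0 := by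
  intro δr δr' δr'' hδr hδr' hδr'' hδri hδrte hδr'i hδr'te δu hδu δw hδw
  set I := Icc ti te with hI
  -- continuity facts
  have hwc : ContinuousOn w I := fun t ht => (hw t ht).continuousWithinAt
  have hw'c : ContinuousOn w' I := fun t ht => (hw' t ht).continuousWithinAt
  have hδrc : ContinuousOn δr I := fun t ht => (hδr t ht).continuousWithinAt
  have hδr'c : ContinuousOn δr' I := fun t ht => (hδr' t ht).continuousWithinAt
  -- the antiderivative
  set F : ℝ → ℝ := fun t => δr t ⬝ᵥ (M *ᵥ w' t) - δr' t ⬝ᵥ (M *ᵥ w t) with hF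
  set g : ℝ → ℝ := fun t => δr t ⬝ᵥ (M *ᵥ w'' t) - δr'' t ⬝ᵥ (M *ᵥ w t) with hg
  have hFderiv : ∀ t ∈ I, HasDerivWithinAt F (g t) I t := by
    intro t ht
    have h1 := dot_hasDerivWithinAt (hδr t ht) (mulVec_hasDerivWithinAt (M := M) (hw' t ht))
    have h2 := dot_hasDerivWithinAt (hδr' t ht) (mulVec_hasDerivWithinAt (M := M) (hw t ht))
    have := h1.fun_sub h2
    refine this.congr_deriv ?_
    show _ = δr t ⬝ᵥ (M *ᵥ w'' t) - δr'' t ⬝ᵥ (M *ᵥ w t)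
    ring
  have hgc : ContinuousOn g I :=
    (dot_continuousOn hδrc (mulVec_continuousOn (M := M) hw'')).sub
      (dot_continuousOn hδr'' (mulVec_continuousOn (M := M) hwc))
  have hFc : ContinuousOn F I :=
    (dot_continuousOn hδrc (mulVec_continuousOn (M := M) hw'c)).sub
      (dot_continuousOn hδr'c (mulVec_continuousOn (M := M) hwc))
  have hgint : IntervalIntegrable g MeasureTheory.volume ti te := by
    apply ContinuousOn.intervalIntegrable
    rwa [uIcc_of_le hti.le]
  have hgI : (∫ t in ti..te, g t) = F te - F ti := by
    apply intervalIntegral.integral_eq_sub_of_hasDeriv_right_of_le hti.le hFc _ hgint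
    intro t ht
    exact ((hFderiv t (Ioo_subset_Icc_self ht)).hasDerivAt
      (Icc_mem_nhds ht.1 ht.2)).hasDerivWithinAt
  have hF0 : F te - F ti = 0 := by
    simp [hF, hδrte, hδri, hδr'te, hδr'i]
  -- integrand equals g on the interval
  have hcongr : EqOn (fun t =>
      (δu t ⬝ᵥ (u t + Gᵀ *ᵥ w t)
        + δw t ⬝ᵥ (-(M *ᵥ r'' t) - k (r t) + b t + G *ᵥ u t)
        + δr t ⬝ᵥ (α • (Cᵀ *ᵥ (C *ᵥ r t - yd t)) - (k' (r t))ᵀ *ᵥ w t)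
        - δr'' t ⬝ᵥ (M *ᵥ w t))) g (uIcc ti te) := by
    rw [uIcc_of_le hti.le]
    intro t ht
    have e1 : u t + Gᵀ *ᵥ w t = 0 := by rw [hopt1 t ht]; abel
    have e2 : -(M *ᵥ r'' t) - k (r t) + b t + G *ᵥ u t = 0 := by
      rw [hopt2 t ht]; abel
    have e3 : α • (Cᵀ *ᵥ (C *ᵥ r t - yd t)) - (k' (r t))ᵀ *ᵥ w t = M *ᵥ w'' t := by
      rw [hopt3 t ht]; abel
    simp only [e1, e2, e3, dotProduct_zero, hg]
    ring
  calc (∫ t in ti..te,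
        (δu t ⬝ᵥ (u t + Gᵀ *ᵥ w t)
          + δw t ⬝ᵥ (-(M *ᵥ r'' t) - k (r t) + b t + G *ᵥ u t)
          + δr t ⬝ᵥ (α • (Cᵀ *ᵥ (C *ᵥ r t - yd t)) - (k' (r t))ᵀ *ᵥ w t)
          - δr'' t ⬝ᵥ (M *ᵥ w t)))
      = ∫ t in ti..te, g t := intervalIntegral.integral_congr hcongr
    _ = F te - F ti := hgI
    _ = 0 := hF0
end
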